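/- arXiv:1904.09511 — 12 statements merged into one kernel-verified Lean document; each statement's English description precedes it below -/
import Mathlib

section
/- Let C be an abelian monoidal category whose tensor product is additive and exact in each variable. Let λ, μ be half-braidings on objects X, Y of C respectively, and let f : X → Y be a morphism that intertwines λ and μ. Then there exists a unique half-braiding κ on the kernel K = ker f such that the kernel inclusion ι : K → X intertwines κ and λ, i.e. κ_A ≫ (ι ⊗ id_A) = (id_A ⊗ ι) ≫ λ_A for every object A. -/
/-!
Exactness of `A ⊗ -` and `- ⊗ A` makes `A ◁ ι` and `ι ▷ A` kernels of `A ◁ f` and `f ▷ A`.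
Because `f` intertwines `λ` and `μ`, `λ_A` maps `ι ▷ A` into the kernel of `A ◁ f` and `λ_A⁻¹`
maps `A ◁ ι` into the kernel of `f ▷ A`, so both restrict to `K`. The restrictions are mutually
inverse, and naturality, the monoidal axiom and uniqueness all follow by cancelling the
monomorphisms `A ◁ ι`.
-/

open CategoryTheory CategoryTheory.Limits CategoryTheory.MonoidalCategory

universe v u

namespace CategoryTheory

def Iso.restrictOfMono {C : Type*} [Category C] {P P' Q Q' : C} (e : P' ≅ Q')
    {m : P ⟶ P'} {n : Q ⟶ Q'} [Mono m] [Mono n] (hom : P ⟶ Q) (inv : Q ⟶ P)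
    (w_hom : hom ≫ n = m ≫ e.hom) (w_inv : inv ≫ m = n ≫ e.inv) : P ≅ Q where
  hom := hom
  inv := inv
  hom_inv_id := by simp [← cancel_mono m, w_inv, reassoc_of% w_hom]
  inv_hom_id := by simp [← cancel_mono n, w_hom, reassoc_of% w_inv]

namespace HalfBraiding

variable {C : Type u} [Category.{v} C] [MonoidalCategory C] {K X : C} (ι : K ⟶ X)
  [∀ A, Mono (A ◁ ι)]

def restrict (l : HalfBraiding X) (β : ∀ A, K ⊗ A ≅ A ⊗ K)
    (hβ : ∀ A, (β A).hom ≫ A ◁ ι = ι ▷ A ≫ (l.β A).hom) : HalfBraiding K where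
  β := β
  monoidal U U' := by
    rw [← cancel_mono ((U ⊗ U') ◁ ι), hβ, l.monoidal]
    simp only [Category.assoc]
    rw [← associator_inv_naturality_right, ← whiskerLeft_comp_assoc, hβ, whiskerLeft_comp_assoc,
      ← associator_naturality_middle_assoc, ← comp_whiskerRight_assoc, hβ,
      comp_whiskerRight_assoc, associator_inv_naturality_left_assoc]
  naturality {U U'} g := by
    rw [← cancel_mono (U' ◁ ι), Category.assoc, hβ, whisker_exchange_assoc, l.naturality,
      ← reassoc_of% hβ, Category.assoc, ← whisker_exchange]

theorem ext_of_mono_whiskerLeft {κ κ' : HalfBraiding K}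
    (h : ∀ A, (κ.β A).hom ≫ A ◁ ι = (κ'.β A).hom ≫ A ◁ ι) : κ = κ' := by
  obtain ⟨β, _, _⟩ := κ
  obtain ⟨β', _, _⟩ := κ'
  congr
  funext A
  exact Iso.ext ((cancel_mono _).mp (h A))

theorem existsUnique_intertwining [∀ A, Mono (ι ▷ A)] (l : HalfBraiding X)
    (lift_hom : ∀ A, ∃ h : K ⊗ A ⟶ A ⊗ K, h ≫ A ◁ ι = ι ▷ A ≫ (l.β A).hom)
    (lift_inv : ∀ A, ∃ k : A ⊗ K ⟶ K ⊗ A, k ≫ ι ▷ A = A ◁ ι ≫ (l.β A).inv) :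
    ∃! κ : HalfBraiding K, ∀ A, ι ▷ A ≫ (l.β A).hom = (κ.β A).hom ≫ A ◁ ι := by
  choose h hh using lift_hom
  choose k hk using lift_inv
  refine ⟨restrict ι l (fun A => (l.β A).restrictOfMono (h A) (k A) (hh A) (hk A)) hh,
    fun A => (hh A).symm, fun κ hκ => ext_of_mono_whiskerLeft ι fun A => ?_⟩
  exact (hκ A).symm.trans (hh A).symm

end HalfBraiding

section PreservesKernel

variable {C D : Type*} [Category C] [Category D] [HasZeroMorphisms C] [HasZeroMorphisms D]
  (G : C ⥤ D) [G.PreservesZeroMorphisms] {X Y : C} (f : X ⟶ Y) [HasKernel f]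
  [PreservesLimit (parallelPair f 0) G]

theorem Functor.mono_map_kernelι : Mono (G.map (kernel.ι f)) :=
  Fork.IsLimit.mono (isLimitOfHasKernelOfPreservesLimit G f)

theorem Functor.exists_lift_map_kernelι {Z : D} (g : Z ⟶ G.obj X) (hg : g ≫ G.map f = 0) :
    ∃ k, k ≫ G.map (kernel.ι f) = g :=
  ⟨_, (Fork.IsLimit.lift' (isLimitOfHasKernelOfPreservesLimit G f) g
    (by rw [hg, comp_zero])).2⟩

end PreservesKernel

end CategoryTheory

/-- In an abelian monoidal category whose tensor product is additive and
exact in each variable, a morphism `f : X ⟶ Y` in the Drinfeld center (i.e. intertwining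
half-braidings `l` on `X` and `m` on `Y`) induces a unique half-braiding `κ` on `kernel f`
making the kernel inclusion `kernel.ι f` intertwine `κ` and `l`. -/
theorem kernel_halfBraiding_exists_unique
    {C : Type u} [Category.{v} C] [MonoidalCategory C] [Abelian C]
    [∀ A : C, (tensorLeft A).Additive] [∀ A : C, (tensorRight A).Additive]
    (hkerL : ∀ (A : C) ⦃X Y : C⦄ (f : X ⟶ Y),
      PreservesLimit (parallelPair f 0) (tensorLeft A))
    (hkerR : ∀ (A : C) ⦃X Y : C⦄ (f : X ⟶ Y),
      PreservesLimit (parallelPair f 0) (tensorRight A))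
    (hcokerL : ∀ (A : C) ⦃X Y : C⦄ (f : X ⟶ Y),
      PreservesColimit (parallelPair f 0) (tensorLeft A))
    (hcokerR : ∀ (A : C) ⦃X Y : C⦄ (f : X ⟶ Y),
      PreservesColimit (parallelPair f 0) (tensorRight A))
    {X Y : C} (l : HalfBraiding X) (m : HalfBraiding Y) (f : X ⟶ Y)
    (hf : ∀ A : C, (f ▷ A) ≫ (m.β A).hom = (l.β A).hom ≫ (A ◁ f)) :
    ∃! κ : HalfBraiding (kernel f),
      ∀ A : C, (kernel.ι f ▷ A) ≫ (l.β A).hom = (κ.β A).hom ≫ (A ◁ kernel.ι f) := by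
  have : ∀ A, Mono (A ◁ kernel.ι f) := fun A =>
    have := hkerL A f; (tensorLeft A).mono_map_kernelι f
  have : ∀ A, Mono (kernel.ι f ▷ A) := fun A =>
    have := hkerR A f; (tensorRight A).mono_map_kernelι f
  have hf_inv (A : C) : (l.β A).inv ≫ f ▷ A = A ◁ f ≫ (m.β A).inv := by
    rw [Iso.inv_comp_eq, ← reassoc_of% hf, Iso.hom_inv_id, Category.comp_id]
  refine HalfBraiding.existsUnique_intertwining (kernel.ι f) l (fun A => ?_) (fun A => ?_)
  · have := hkerL A f
    refine (tensorLeft A).exists_lift_map_kernelι f _ ?_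
    change (_ ≫ _) ≫ A ◁ f = 0
    rw [Category.assoc, ← hf, ← comp_whiskerRight_assoc, kernel.condition,
      show (0 : kernel f ⟶ Y) ▷ A = 0 from (tensorRight A).map_zero _ _, zero_comp]
  · have := hkerR A f
    refine (tensorRight A).exists_lift_map_kernelι f _ ?_
    change (_ ≫ _) ≫ f ▷ A = 0
    rw [Category.assoc, hf_inv, ← whiskerLeft_comp_assoc, kernel.condition,
      show A ◁ (0 : kernel f ⟶ Y) = 0 from (tensorLeft A).map_zero _ _, zero_comp]
end

section
/- Let C be an abelian monoidal category whose tensor product is additive and exact in each variable. Let λ, μ be half-braidings on objects X, Y of C respectively, and let f : X → Y be a morphism that intertwines λ and μ. Then there exists a unique half-braiding κ on the cokernel Q = coker f such that the cokernel projection π : Y → Q intertwines μ and κ, i.e. μ_A ≫ (π ⊗ id_A) = (id_A ⊗ π) ≫ κ_A for every object A. -/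
open CategoryTheory CategoryTheory.Limits CategoryTheory.MonoidalCategory

universe v u

/-- In an abelian monoidal category whose tensor product is additive and
exact in each variable, a morphism `f : X ⟶ Y` intertwining half-braidings `l` on `X` and
`m` on `Y` induces a unique half-braiding `κ` on `cokernel f` making the cokernel projection
`cokernel.π f` intertwine `m` and `κ`. -/
theorem cokernel_halfBraiding_exists_unique
    {C : Type u} [Category.{v} C] [MonoidalCategory C] [Abelian C]
    [∀ A : C, (tensorLeft A).Additive] [∀ A : C, (tensorRight A).Additive]
    (hkerL : ∀ (A : C) ⦃X Y : C⦄ (f : X ⟶ Y),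
      PreservesLimit (parallelPair f 0) (tensorLeft A))
    (hkerR : ∀ (A : C) ⦃X Y : C⦄ (f : X ⟶ Y),
      PreservesLimit (parallelPair f 0) (tensorRight A))
    (hcokerL : ∀ (A : C) ⦃X Y : C⦄ (f : X ⟶ Y),
      PreservesColimit (parallelPair f 0) (tensorLeft A))
    (hcokerR : ∀ (A : C) ⦃X Y : C⦄ (f : X ⟶ Y),
      PreservesColimit (parallelPair f 0) (tensorRight A))
    {X Y : C} (l : HalfBraiding X) (m : HalfBraiding Y) (f : X ⟶ Y)
    (hf : ∀ A : C, (f ▷ A) ≫ (m.β A).hom = (l.β A).hom ≫ (A ◁ f)) :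
    ∃! κ : HalfBraiding (cokernel f),
      ∀ A : C, (cokernel.π f ▷ A) ≫ (κ.β A).hom = (m.β A).hom ≫ (A ◁ cokernel.π f) := by
  let π := cokernel.π f
  -- right whiskering of π expressed via the cokernel comparison
  have hR : ∀ A : C, π ▷ A =
      cokernel.π ((tensorRight A).map f) ≫ cokernelComparison f (tensorRight A) := by
    intro A
    haveI := hcokerR A f
    simpa using (π_comp_cokernelComparison f (tensorRight A)).symm
  have hL : ∀ A : C, A ◁ π =
      cokernel.π ((tensorLeft A).map f) ≫ cokernelComparison f (tensorLeft A) := by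
    intro A
    haveI := hcokerL A f
    simpa using (π_comp_cokernelComparison f (tensorLeft A)).symm
  have epiR : ∀ A : C, Epi (π ▷ A) := by
    intro A
    haveI := hcokerR A f
    rw [hR A]
    exact epi_comp _ _
  have epiL : ∀ A : C, Epi (A ◁ π) := by
    intro A
    haveI := hcokerL A f
    rw [hL A]
    exact epi_comp _ _
  -- zero conditions
  have hz1 : ∀ A : C, (tensorRight A).map f ≫ (m.β A).hom ≫ (A ◁ π) = 0 := by
    intro A
    have : (f ▷ A) ≫ (m.β A).hom ≫ (A ◁ π) = 0 := by
      rw [reassoc_of% (hf A), ← MonoidalCategory.whiskerLeft_comp]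
      show _ ≫ (tensorLeft A).map (f ≫ π) = 0
      rw [cokernel.condition, Functor.map_zero, comp_zero]
    simpa using this
  have hf' : ∀ A : C, (A ◁ f) ≫ (m.β A).inv = (l.β A).inv ≫ (f ▷ A) := by
    intro A
    rw [Iso.comp_inv_eq, Category.assoc, hf A, Iso.inv_hom_id_assoc]
  have hz2 : ∀ A : C, (tensorLeft A).map f ≫ (m.β A).inv ≫ (π ▷ A) = 0 := by
    intro A
    have : (A ◁ f) ≫ (m.β A).inv ≫ (π ▷ A) = 0 := by
      rw [reassoc_of% (hf' A), ← comp_whiskerRight]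
      show _ ≫ (tensorRight A).map (f ≫ π) = 0
      rw [cokernel.condition, Functor.map_zero, comp_zero]
    simpa using this
  -- the forward maps
  let h : ∀ A : C, cokernel f ⊗ A ⟶ A ⊗ cokernel f := fun A => by
    haveI := hcokerR A f
    exact inv (cokernelComparison f (tensorRight A)) ≫
      cokernel.desc _ ((m.β A).hom ≫ (A ◁ π)) (hz1 A)
  have hh : ∀ A : C, (π ▷ A) ≫ h A = (m.β A).hom ≫ (A ◁ π) := by
    intro A
    haveI := hcokerR A f
    rw [hR A]
    simp [h]
  -- the inverse maps
  let h' : ∀ A : C, A ⊗ cokernel f ⟶ cokernel f ⊗ A := fun A => by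
    haveI := hcokerL A f
    exact inv (cokernelComparison f (tensorLeft A)) ≫
      cokernel.desc _ ((m.β A).inv ≫ (π ▷ A)) (hz2 A)
  have hh' : ∀ A : C, (A ◁ π) ≫ h' A = (m.β A).inv ≫ (π ▷ A) := by
    intro A
    haveI := hcokerL A f
    rw [hL A]
    simp [h']
  have hhi : ∀ A : C, h A ≫ h' A = 𝟙 _ := by
    intro A
    haveI := epiR A
    rw [← cancel_epi (π ▷ A), reassoc_of% (hh A), hh' A, Iso.hom_inv_id_assoc,
      Category.comp_id]
  have hih : ∀ A : C, h' A ≫ h A = 𝟙 _ := by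
    intro A
    haveI := epiL A
    rw [← cancel_epi (A ◁ π), reassoc_of% (hh' A), hh A, Iso.inv_hom_id_assoc,
      Category.comp_id]
  -- the half-braiding
  refine ⟨{ β := fun A => ⟨h A, h' A, hhi A, hih A⟩
            monoidal := ?_
            naturality := ?_ }, fun A => hh A, ?_⟩
  · intro A B
    haveI := epiR (A ⊗ B)
    rw [← cancel_epi (π ▷ (A ⊗ B))]
    show (π ▷ (A ⊗ B)) ≫ h (A ⊗ B) = _
    rw [hh (A ⊗ B), m.monoidal]
    slice_rhs 1 2 => rw [associator_inv_naturality_left]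
    slice_rhs 2 3 => rw [← comp_whiskerRight, hh A, comp_whiskerRight]
    slice_rhs 3 4 => rw [associator_naturality_middle]
    slice_rhs 4 5 => rw [← MonoidalCategory.whiskerLeft_comp, hh B,
      MonoidalCategory.whiskerLeft_comp]
    slice_rhs 5 6 => rw [associator_inv_naturality_right]
    simp
  · intro A B g
    haveI := epiR A
    rw [← cancel_epi (π ▷ A)]
    show (π ▷ A) ≫ (cokernel f ◁ g) ≫ h B = (π ▷ A) ≫ h A ≫ (g ▷ cokernel f)
    rw [← whisker_exchange_assoc, hh B, reassoc_of% (hh A),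
      HalfBraiding.naturality_assoc, ← whisker_exchange]
  · rintro ⟨β', mon', nat'⟩ hβ'
    have e : β' = fun A => ⟨h A, h' A, hhi A, hih A⟩ := by
      funext A
      ext
      haveI := epiR A
      rw [← cancel_epi (π ▷ A)]
      exact (hβ' A).trans (hh A).symm
    subst e
    rfl
end

section
/- Let C be an abelian monoidal category whose tensor product is additive and exact in each variable. Let λ, μ be half-braidings on X, Y, let f : X → Y intertwine λ and μ, and factor f = e ≫ m through its image I, with e : X → I epi and m : I → Y mono. Then there exists a unique half-braiding ν on I such that e intertwines λ and ν; moreover this same ν also makes m intertwine ν and μ (i.e. the half-braiding induced on the image from λ via the epi agrees with the one induced from μ via the mono). -/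
/-!
Right exactness of `A ⊗ -` and `- ⊗ A` makes `e ▷ A` the cokernel of `kernel.ι e ▷ A` (and
`A ◁ e` that of `A ◁ kernel.ι e`); left exactness makes `A ◁ mI` and `mI ▷ A` mono. Since
`f = e ≫ mI` intertwines `l` and `m`, the map `(l.β A).hom ≫ A ◁ e` vanishes on
`kernel.ι e ▷ A` (test this after the mono `A ◁ mI`), so it descends along `e ▷ A` to the
component of `ν`; the inverse descends along `A ◁ e` in the same way. The axioms of `ν`, its
uniqueness and the intertwining property of `mI` are all checked after precomposing with the
epimorphisms `e ▷ A`.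
-/

open CategoryTheory CategoryTheory.Limits CategoryTheory.MonoidalCategory

universe v u

namespace CategoryTheory

section

variable {C D : Type*} [Category C] [Category D] [Abelian C] [HasZeroMorphisms D]
  (F : C ⥤ D) [F.PreservesZeroMorphisms] {X Y : C} (e : X ⟶ Y) [Epi e]
  [PreservesColimit (parallelPair (kernel.ι e) 0) F]

/-- `e` is the cokernel of `kernel.ι e`, and `F` preserves that cokernel. -/
lemma Functor.exists_map_comp_eq_of_map_kernel_ι_comp_eq_zero {T : D} (g : F.obj X ⟶ T)
    (hg : F.map (kernel.ι e) ≫ g = 0) : ∃ h : F.obj Y ⟶ T, F.map e ≫ h = g :=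
  let he : IsColimit (CokernelCofork.ofπ e (kernel.condition e)) :=
    Abelian.epiIsCokernelOfKernel _ (limit.isLimit _)
  ⟨_, (CokernelCofork.IsColimit.desc' (CokernelCofork.mapIsColimit _ he F) g hg).2⟩

end

namespace HalfBraiding

variable {C : Type*} [Category C] [MonoidalCategory C] {X I : C}

lemma ext_of_epi_whiskerRight {ν ν' : HalfBraiding I} (e : X ⟶ I) [∀ A, Epi (e ▷ A)]
    (h : ∀ A, e ▷ A ≫ (ν.β A).hom = e ▷ A ≫ (ν'.β A).hom) : ν = ν' := by
  obtain ⟨β, _, _⟩ := ν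
  obtain ⟨β', _, _⟩ := ν'
  obtain rfl : β = β' := funext fun A => Iso.ext ((cancel_epi (e ▷ A)).1 (h A))
  rfl

variable (l : HalfBraiding X) (e : X ⟶ I) [∀ A, Epi (e ▷ A)] [∀ A, Epi (A ◁ e)]
  (hom : ∀ A, I ⊗ A ⟶ A ⊗ I) (hom_w : ∀ A, e ▷ A ≫ hom A = (l.β A).hom ≫ A ◁ e)
  (inv : ∀ A, A ⊗ I ⟶ I ⊗ A) (inv_w : ∀ A, A ◁ e ≫ inv A = (l.β A).inv ≫ e ▷ A)

def descend : HalfBraiding I where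
  β A :=
    { hom := hom A
      inv := inv A
      hom_inv_id := by
        rw [← cancel_epi (e ▷ A), reassoc_of% hom_w A, inv_w A, Iso.hom_inv_id_assoc,
          Category.comp_id]
      inv_hom_id := by
        rw [← cancel_epi (A ◁ e), reassoc_of% inv_w A, hom_w A, Iso.inv_hom_id_assoc,
          Category.comp_id] }
  monoidal U U' := by
    dsimp only
    rw [← cancel_epi (e ▷ (U ⊗ U')), hom_w, l.monoidal]
    simp only [Category.assoc]
    rw [associator_inv_naturality_left_assoc, ← comp_whiskerRight_assoc, hom_w U,
      comp_whiskerRight_assoc, associator_naturality_middle_assoc,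
      ← whiskerLeft_comp_assoc, hom_w U', whiskerLeft_comp_assoc,
      associator_inv_naturality_right]
  naturality {U U'} g := by
    dsimp only
    rw [← cancel_epi (e ▷ U), ← whisker_exchange_assoc, hom_w U', l.naturality_assoc,
      ← whisker_exchange, reassoc_of% hom_w U]

end HalfBraiding

section Image

variable {C : Type*} [Category C] [MonoidalCategory C] {X Y I : C}
  {l : HalfBraiding X} {m : HalfBraiding Y} {f : X ⟶ Y}
  (hf : ∀ A, f ▷ A ≫ (m.β A).hom = (l.β A).hom ≫ A ◁ f) {e : X ⟶ I} {mI : I ⟶ Y}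
  (hfac : f = e ≫ mI)
include hf hfac

lemma whiskerRight_comp_hom_comp_whiskerLeft_eq_zero [HasZeroMorphisms C] (A : C)
    [(tensorRight A).PreservesZeroMorphisms] [Mono (A ◁ mI)] {K : C} (k : K ⟶ X)
    (hk : k ≫ e = 0) : k ▷ A ≫ (l.β A).hom ≫ A ◁ e = 0 := by
  have hzero : (0 : K ⟶ Y) ▷ A = 0 := (tensorRight A).map_zero K Y
  rw [← cancel_mono (A ◁ mI), Category.assoc, Category.assoc, ← whiskerLeft_comp, ← hfac,
    ← hf, ← comp_whiskerRight_assoc, hfac, reassoc_of% hk, zero_comp, hzero, zero_comp,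
    zero_comp]

lemma whiskerLeft_comp_inv_comp_whiskerRight_eq_zero [HasZeroMorphisms C] (A : C)
    [(tensorLeft A).PreservesZeroMorphisms] [Mono (mI ▷ A)] {K : C} (k : K ⟶ X)
    (hk : k ≫ e = 0) : A ◁ k ≫ (l.β A).inv ≫ e ▷ A = 0 := by
  have hzero : A ◁ (0 : K ⟶ Y) = 0 := (tensorLeft A).map_zero K Y
  have hf' : (l.β A).inv ≫ f ▷ A = A ◁ f ≫ (m.β A).inv := by
    rw [Iso.inv_comp_eq, ← reassoc_of% hf, Iso.hom_inv_id, Category.comp_id]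
  rw [← cancel_mono (mI ▷ A), Category.assoc, Category.assoc, ← comp_whiskerRight, ← hfac,
    hf', ← whiskerLeft_comp_assoc, hfac, reassoc_of% hk, zero_comp, hzero, zero_comp,
    zero_comp]

lemma comm_right_of_comm_comp (ν : HalfBraiding I) (A : C)
    [Epi (e ▷ A)] (hν : e ▷ A ≫ (ν.β A).hom = (l.β A).hom ≫ A ◁ e) :
    mI ▷ A ≫ (m.β A).hom = (ν.β A).hom ≫ A ◁ mI := by
  rw [← cancel_epi (e ▷ A), ← comp_whiskerRight_assoc, ← hfac, hf, reassoc_of% hν,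
    ← whiskerLeft_comp, ← hfac]

end Image

end CategoryTheory

/-- In an abelian monoidal category whose tensor product is additive and
exact in each variable, if `f = e ≫ mI` is an image factorization (with `e` epi and `mI` mono)
of a morphism `f` intertwining half-braidings `l` on `X` and `m` on `Y`, then there is a
unique half-braiding `ν` on the image `I` making `e` intertwine `l` and `ν`, and this `ν`
also makes `mI` intertwine `ν` and `m`. -/
theorem image_halfBraiding_exists_unique
    {C : Type u} [Category.{v} C] [MonoidalCategory C] [Abelian C]
    [∀ A : C, (tensorLeft A).Additive] [∀ A : C, (tensorRight A).Additive]
    (hkerL : ∀ (A : C) ⦃X Y : C⦄ (f : X ⟶ Y),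
      PreservesLimit (parallelPair f 0) (tensorLeft A))
    (hkerR : ∀ (A : C) ⦃X Y : C⦄ (f : X ⟶ Y),
      PreservesLimit (parallelPair f 0) (tensorRight A))
    (hcokerL : ∀ (A : C) ⦃X Y : C⦄ (f : X ⟶ Y),
      PreservesColimit (parallelPair f 0) (tensorLeft A))
    (hcokerR : ∀ (A : C) ⦃X Y : C⦄ (f : X ⟶ Y),
      PreservesColimit (parallelPair f 0) (tensorRight A))
    {X Y I : C} (l : HalfBraiding X) (m : HalfBraiding Y) (f : X ⟶ Y)
    (hf : ∀ A : C, (f ▷ A) ≫ (m.β A).hom = (l.β A).hom ≫ (A ◁ f))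
    (e : X ⟶ I) (mI : I ⟶ Y) [Epi e] [Mono mI] (hfac : f = e ≫ mI) :
    (∃! ν : HalfBraiding I,
      ∀ A : C, (e ▷ A) ≫ (ν.β A).hom = (l.β A).hom ≫ (A ◁ e)) ∧
    (∀ ν : HalfBraiding I,
      (∀ A : C, (e ▷ A) ≫ (ν.β A).hom = (l.β A).hom ≫ (A ◁ e)) →
      ∀ A : C, (mI ▷ A) ≫ (m.β A).hom = (ν.β A).hom ≫ (A ◁ mI)) := by
  have epi_whiskerRight (A : C) : Epi (e ▷ A) :=
    have := hcokerR A
    have := NormalMonoCategory.preservesEpimorphisms_of_preservesCokernels (tensorRight A)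
    (tensorRight A).map_epi e
  have epi_whiskerLeft (A : C) : Epi (A ◁ e) :=
    have := hcokerL A
    have := NormalMonoCategory.preservesEpimorphisms_of_preservesCokernels (tensorLeft A)
    (tensorLeft A).map_epi e
  have mono_whiskerRight (A : C) : Mono (mI ▷ A) :=
    have := hkerR A
    have := NormalEpiCategory.preservesMonomorphisms_of_preservesKernels (tensorRight A)
    (tensorRight A).map_mono mI
  have mono_whiskerLeft (A : C) : Mono (A ◁ mI) :=
    have := hkerL A
    have := NormalEpiCategory.preservesMonomorphisms_of_preservesKernels (tensorLeft A)
    (tensorLeft A).map_mono mI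
  choose hom hom_w using fun A : C =>
    have := hcokerR A (kernel.ι e)
    (tensorRight A).exists_map_comp_eq_of_map_kernel_ι_comp_eq_zero e _
      (whiskerRight_comp_hom_comp_whiskerLeft_eq_zero hf hfac A _ (kernel.condition e))
  choose inv inv_w using fun A : C =>
    have := hcokerL A (kernel.ι e)
    (tensorLeft A).exists_map_comp_eq_of_map_kernel_ι_comp_eq_zero e _
      (whiskerLeft_comp_inv_comp_whiskerRight_eq_zero hf hfac A _ (kernel.condition e))
  refine ⟨⟨l.descend e hom hom_w inv inv_w, hom_w, fun ν hν => ?_⟩, fun ν hν A => ?_⟩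
  · exact HalfBraiding.ext_of_epi_whiskerRight e fun A => (hν A).trans (hom_w A).symm
  · exact comm_right_of_comm_comp hf hfac ν A (hν A)
end

section
/- Let C be a braided abelian monoidal category whose tensor product is additive and exact in each variable. Let (λ¹, λ²) be a pair of half-braidings on X satisfying COMM and (μ¹, μ²) a pair of half-braidings on Y satisfying COMM, and let f : X → Y intertwine λ¹ with μ¹ and λ² with μ². Let κ¹, κ² be the half-braidings induced on K = ker f by λ¹ and λ² respectively (the unique half-braidings making the kernel inclusion intertwining). Then the pair (κ¹, κ²) satisfies COMM. -/
open CategoryTheory CategoryTheory.Limits CategoryTheory.MonoidalCategory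

universe v u

variable {C : Type u} [Category.{v} C] [MonoidalCategory C]

/-- The COMM compatibility condition of an ordered pair of half-braidings `(l₁, l₂)` on an
object `X` of a braided category: for all `A B`, the two composites
`A ⊗ B ⊗ X ⟶ X ⊗ B ⊗ A` given by
`(id_A ⊗ λ²_B) ≫ (λ¹_A ⊗ id_B) ≫ (id_X ⊗ c_{A,B})` and
`((c_{B,A})⁻¹ ⊗ id_X) ≫ (id_B ⊗ λ¹_A) ≫ (λ²_B ⊗ id_A)` agree, where
`λⁱ_U = ((lᵢ.β U).inv : U ⊗ X ⟶ X ⊗ U)`. -/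
def COMM [BraidedCategory C] {X : C} (l₁ l₂ : HalfBraiding X) : Prop :=
  ∀ A B : C,
    (α_ A B X).hom ≫ (A ◁ (l₂.β B).inv) ≫ (α_ A X B).inv ≫ ((l₁.β A).inv ▷ B) ≫
        (α_ X A B).hom ≫ (X ◁ (β_ A B).hom) =
      ((β_ B A).inv ▷ X) ≫ (α_ B A X).hom ≫ (B ◁ (l₁.β A).inv) ≫ (α_ B X A).inv ≫
        ((l₂.β B).inv ▷ A) ≫ (α_ X B A).hom

/-- In a braided abelian monoidal category with tensor product additive and
exact in each variable, the pair of half-braidings induced on the kernel of a doubly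
intertwining morphism from a COMM-pair again satisfies COMM. -/
theorem kernel_halfBraidings_COMM [BraidedCategory C] [Abelian C]
    [∀ A : C, (tensorLeft A).Additive] [∀ A : C, (tensorRight A).Additive]
    (hkerL : ∀ (A : C) ⦃X Y : C⦄ (f : X ⟶ Y),
      PreservesLimit (parallelPair f 0) (tensorLeft A))
    (hkerR : ∀ (A : C) ⦃X Y : C⦄ (f : X ⟶ Y),
      PreservesLimit (parallelPair f 0) (tensorRight A))
    (hcokerL : ∀ (A : C) ⦃X Y : C⦄ (f : X ⟶ Y),
      PreservesColimit (parallelPair f 0) (tensorLeft A))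
    (hcokerR : ∀ (A : C) ⦃X Y : C⦄ (f : X ⟶ Y),
      PreservesColimit (parallelPair f 0) (tensorRight A))
    {X Y : C} (l₁ l₂ : HalfBraiding X) (m₁ m₂ : HalfBraiding Y)
    (hl : COMM l₁ l₂) (hm : COMM m₁ m₂) (f : X ⟶ Y)
    (hf₁ : ∀ A : C, (f ▷ A) ≫ (m₁.β A).hom = (l₁.β A).hom ≫ (A ◁ f))
    (hf₂ : ∀ A : C, (f ▷ A) ≫ (m₂.β A).hom = (l₂.β A).hom ≫ (A ◁ f))
    (κ₁ κ₂ : HalfBraiding (kernel f))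
    (hκ₁ : ∀ A : C, (kernel.ι f ▷ A) ≫ (l₁.β A).hom = (κ₁.β A).hom ≫ (A ◁ kernel.ι f))
    (hκ₂ : ∀ A : C, (kernel.ι f ▷ A) ≫ (l₂.β A).hom = (κ₂.β A).hom ≫ (A ◁ kernel.ι f)) :
    COMM κ₁ κ₂ := by
  intro A B
  have e₁ : ∀ U : C, (κ₁.β U).inv ≫ (kernel.ι f ▷ U) = (U ◁ kernel.ι f) ≫ (l₁.β U).inv := by
    intro U
    rw [Iso.inv_comp_eq, ← Category.assoc, ← hκ₁, Category.assoc, Iso.hom_inv_id,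
      Category.comp_id]
  have e₂ : ∀ U : C, (κ₂.β U).inv ≫ (kernel.ι f ▷ U) = (U ◁ kernel.ι f) ≫ (l₂.β U).inv := by
    intro U
    rw [Iso.inv_comp_eq, ← Category.assoc, ← hκ₂, Category.assoc, Iso.hom_inv_id,
      Category.comp_id]
  have hiso : IsIso (kernelComparison f (tensorRight (B ⊗ A))) := by
    have := hkerR (B ⊗ A) f
    rw [← PreservesKernel.iso_hom]
    infer_instance
  have hmono : Mono (kernel.ι f ▷ (B ⊗ A)) := by
    have h : kernel.ι f ▷ (B ⊗ A) = (tensorRight (B ⊗ A)).map (kernel.ι f) := rfl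
    rw [h, ← kernelComparison_comp_ι f (tensorRight (B ⊗ A))]
    exact mono_comp _ _
  rw [← cancel_mono (kernel.ι f ▷ (B ⊗ A))]
  have hLHS :
      ((α_ A B (kernel f)).hom ≫ (A ◁ (κ₂.β B).inv) ≫ (α_ A (kernel f) B).inv ≫
          ((κ₁.β A).inv ▷ B) ≫ (α_ (kernel f) A B).hom ≫ ((kernel f) ◁ (β_ A B).hom)) ≫
        (kernel.ι f ▷ (B ⊗ A)) =
      ((A ⊗ B) ◁ kernel.ι f) ≫ (α_ A B X).hom ≫ (A ◁ (l₂.β B).inv) ≫ (α_ A X B).inv ≫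
        ((l₁.β A).inv ▷ B) ≫ (α_ X A B).hom ≫ (X ◁ (β_ A B).hom) := by
    slice_lhs 6 7 => rw [whisker_exchange]
    slice_lhs 5 6 => rw [← associator_naturality_left]
    slice_lhs 4 5 => rw [← comp_whiskerRight, e₁, comp_whiskerRight]
    slice_lhs 3 4 => rw [← associator_inv_naturality_middle]
    slice_lhs 2 3 => rw [← MonoidalCategory.whiskerLeft_comp, e₂, MonoidalCategory.whiskerLeft_comp]
    slice_lhs 1 2 => rw [← associator_naturality_right]
    simp only [Category.assoc]
  have hRHS :
      (((β_ B A).inv ▷ (kernel f)) ≫ (α_ B A (kernel f)).hom ≫ (B ◁ (κ₁.β A).inv) ≫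
          (α_ B (kernel f) A).inv ≫ ((κ₂.β B).inv ▷ A) ≫ (α_ (kernel f) B A).hom) ≫
        (kernel.ι f ▷ (B ⊗ A)) =
      ((A ⊗ B) ◁ kernel.ι f) ≫ ((β_ B A).inv ▷ X) ≫ (α_ B A X).hom ≫ (B ◁ (l₁.β A).inv) ≫
        (α_ B X A).inv ≫ ((l₂.β B).inv ▷ A) ≫ (α_ X B A).hom := by
    slice_lhs 6 7 => rw [← associator_naturality_left]
    slice_lhs 5 6 => rw [← comp_whiskerRight, e₂, comp_whiskerRight]
    slice_lhs 4 5 => rw [← associator_inv_naturality_middle]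
    slice_lhs 3 4 => rw [← MonoidalCategory.whiskerLeft_comp, e₁, MonoidalCategory.whiskerLeft_comp]
    slice_lhs 2 3 => rw [← associator_naturality_right]
    slice_lhs 1 2 => rw [← whisker_exchange]
    simp only [Category.assoc]
  simp only [← Category.assoc] at hLHS hRHS ⊢
  rw [hLHS, hRHS]
  simp only [Category.assoc]
  rw [hl]
end

section
/- Let C be a braided abelian monoidal category whose tensor product is additive and exact in each variable. Let (λ¹, λ²) be a pair of half-braidings on X satisfying COMM and (μ¹, μ²) a pair of half-braidings on Y satisfying COMM, and let f : X → Y intertwine λ¹ with μ¹ and λ² with μ². Let κ¹, κ² be the half-braidings induced on the cokernel Q = coker f by μ¹ and μ² respectively (the unique half-braidings making the cokernel projection intertwining). Then the pair (κ¹, κ²) satisfies COMM. -/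
open CategoryTheory CategoryTheory.Limits CategoryTheory.MonoidalCategory

universe v u

variable {C : Type u} [Category.{v} C] [MonoidalCategory C]

/-- In a braided abelian monoidal category with tensor product additive and
exact in each variable, the pair of half-braidings induced on the cokernel of a doubly
intertwining morphism from a COMM-pair again satisfies COMM. -/
theorem cokernel_halfBraidings_COMM [BraidedCategory C] [Abelian C]
    [∀ A : C, (tensorLeft A).Additive] [∀ A : C, (tensorRight A).Additive]
    (hkerL : ∀ (A : C) ⦃X Y : C⦄ (f : X ⟶ Y),
      PreservesLimit (parallelPair f 0) (tensorLeft A))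
    (hkerR : ∀ (A : C) ⦃X Y : C⦄ (f : X ⟶ Y),
      PreservesLimit (parallelPair f 0) (tensorRight A))
    (hcokerL : ∀ (A : C) ⦃X Y : C⦄ (f : X ⟶ Y),
      PreservesColimit (parallelPair f 0) (tensorLeft A))
    (hcokerR : ∀ (A : C) ⦃X Y : C⦄ (f : X ⟶ Y),
      PreservesColimit (parallelPair f 0) (tensorRight A))
    {X Y : C} (l₁ l₂ : HalfBraiding X) (m₁ m₂ : HalfBraiding Y)
    (hl : COMM l₁ l₂) (hm : COMM m₁ m₂) (f : X ⟶ Y)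
    (hf₁ : ∀ A : C, (f ▷ A) ≫ (m₁.β A).hom = (l₁.β A).hom ≫ (A ◁ f))
    (hf₂ : ∀ A : C, (f ▷ A) ≫ (m₂.β A).hom = (l₂.β A).hom ≫ (A ◁ f))
    (κ₁ κ₂ : HalfBraiding (cokernel f))
    (hκ₁ : ∀ A : C, (cokernel.π f ▷ A) ≫ (κ₁.β A).hom = (m₁.β A).hom ≫ (A ◁ cokernel.π f))
    (hκ₂ : ∀ A : C, (cokernel.π f ▷ A) ≫ (κ₂.β A).hom = (m₂.β A).hom ≫ (A ◁ cokernel.π f)) :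
    COMM κ₁ κ₂ := by
  intro A B
  have inv₁ : ∀ W : C, (W ◁ cokernel.π f) ≫ (κ₁.β W).inv
      = (m₁.β W).inv ≫ (cokernel.π f ▷ W) := by
    intro W
    rw [Iso.comp_inv_eq, Category.assoc, hκ₁ W, Iso.inv_hom_id_assoc]
  have inv₂ : ∀ W : C, (W ◁ cokernel.π f) ≫ (κ₂.β W).inv
      = (m₂.β W).inv ≫ (cokernel.π f ▷ W) := by
    intro W
    rw [Iso.comp_inv_eq, Category.assoc, hκ₂ W, Iso.inv_hom_id_assoc]
  have hπ : Epi ((A ⊗ B) ◁ cokernel.π f) := by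
    have := hcokerL (A ⊗ B) f
    have h : (A ⊗ B) ◁ cokernel.π f
        = cokernel.π ((tensorLeft (A ⊗ B)).map f) ≫ cokernelComparison f (tensorLeft (A ⊗ B)) :=
      (π_comp_cokernelComparison f (tensorLeft (A ⊗ B))).symm
    rw [h]
    exact epi_comp _ _
  rw [← cancel_epi ((A ⊗ B) ◁ cokernel.π f)]
  -- left hand side
  rw [associator_naturality_right_assoc, ← MonoidalCategory.whiskerLeft_comp_assoc, inv₂ B,
    MonoidalCategory.whiskerLeft_comp_assoc, associator_inv_naturality_middle_assoc,
    ← comp_whiskerRight_assoc, inv₁ A, comp_whiskerRight_assoc,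
    associator_naturality_left_assoc, ← whisker_exchange]
  -- right hand side
  rw [whisker_exchange_assoc, associator_naturality_right_assoc,
    ← MonoidalCategory.whiskerLeft_comp_assoc, inv₁ A,
    MonoidalCategory.whiskerLeft_comp_assoc, associator_inv_naturality_middle_assoc,
    ← comp_whiskerRight_assoc, inv₂ B, comp_whiskerRight_assoc,
    associator_naturality_left]
  rw [reassoc_of% (hm A B)]
end

section
/- Let C be a symmetric monoidal category. If (λ¹, λ²) is a pair of half-braidings on X satisfying COMM and (μ¹, μ²) is a pair of half-braidings on Y satisfying COMM, then the pair (λ¹ ⊗ μ¹, λ² ⊗ μ²) of half-braidings on X ⊗ Y satisfies COMM, where for half-braidings λ on X and μ on Y the tensor-product half-braiding λ ⊗ μ on X ⊗ Y is given (suppressing associators) by (λ ⊗ μ)_A = (λ_A ⊗ id_Y) ≫ (id_X ⊗ μ_A) (the half-braiding of the tensor product in the Drinfeld center Center C). -/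
open CategoryTheory CategoryTheory.MonoidalCategory

universe v u

variable {C : Type u} [Category.{v} C] [MonoidalCategory C]

set_option maxHeartbeats 1600000 in
/-- In a symmetric monoidal category, the tensor product of half-braidings
(i.e. the half-braiding of the tensor product in the Drinfeld center, `Center.tensorObj`)
of two COMM-pairs is again a COMM-pair. -/
theorem tensor_halfBraidings_COMM [SymmetricCategory C]
    {X Y : C} (l₁ l₂ : HalfBraiding X) (m₁ m₂ : HalfBraiding Y)
    (hl : COMM l₁ l₂) (hm : COMM m₁ m₂) :
    COMM ((Center.tensorObj ⟨X, l₁⟩ ⟨Y, m₁⟩).2 : HalfBraiding (X ⊗ Y))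
      ((Center.tensorObj ⟨X, l₂⟩ ⟨Y, m₂⟩).2 : HalfBraiding (X ⊗ Y)) := by
  
  intro A B
  have hlAB := hl A B
  have hmAB := hm A B
  rw [← SymmetricCategory.braiding_swap_eq_inv_braiding] at hlAB hmAB
  dsimp [Center.tensorObj]
  simp only [Iso.trans_inv, Iso.symm_inv, whiskerRightIso_inv, whiskerLeftIso_inv,
    Category.assoc]
  rw [← SymmetricCategory.braiding_swap_eq_inv_braiding]
  set la := (l₁.β A).inv
  set lb := (l₂.β B).inv
  set ma := (m₁.β A).inv
  set mb := (m₂.β B).inv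
  set c := (β_ A B).hom
  calc (α_ A B (X ⊗ Y)).hom ≫
      A ◁ ((α_ B X Y).inv ≫ lb ▷ Y ≫ (α_ X B Y).hom ≫ X ◁ mb ≫ (α_ X Y B).inv) ≫
        (α_ A (X ⊗ Y) B).inv ≫
          ((α_ A X Y).inv ≫ la ▷ Y ≫ (α_ X A Y).hom ≫ X ◁ ma ≫ (α_ X Y A).inv) ▷ B ≫
            (α_ (X ⊗ Y) A B).hom ≫ (X ⊗ Y) ◁ c
    = 𝟙 ((A ⊗ B) ⊗ (X ⊗ Y)) ⊗≫ A ◁ (lb ▷ Y) ⊗≫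
        ((A ⊗ X) ◁ mb ≫ la ▷ (Y ⊗ B)) ⊗≫ (X ◁ ma) ▷ B ⊗≫
        (X ⊗ Y) ◁ c ⊗≫ 𝟙 ((X ⊗ Y) ⊗ (B ⊗ A)) := by coherence
  _ = 𝟙 ((A ⊗ B) ⊗ (X ⊗ Y)) ⊗≫ A ◁ (lb ▷ Y) ⊗≫
        (la ▷ (B ⊗ Y) ≫ (X ⊗ A) ◁ mb) ⊗≫ (X ◁ ma) ▷ B ⊗≫
        (X ⊗ Y) ◁ c ⊗≫ 𝟙 ((X ⊗ Y) ⊗ (B ⊗ A)) := by rw [whisker_exchange la mb]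
  _ = 𝟙 ((A ⊗ B) ⊗ (X ⊗ Y)) ⊗≫ A ◁ (lb ▷ Y) ⊗≫ la ▷ (B ⊗ Y) ⊗≫
        X ◁ ((α_ A B Y).hom ≫ A ◁ mb ≫ (α_ A Y B).inv ≫ ma ▷ B ≫
          (α_ Y A B).hom ≫ Y ◁ c) ⊗≫ 𝟙 ((X ⊗ Y) ⊗ (B ⊗ A)) := by coherence
  _ = 𝟙 ((A ⊗ B) ⊗ (X ⊗ Y)) ⊗≫ A ◁ (lb ▷ Y) ⊗≫ la ▷ (B ⊗ Y) ⊗≫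
        X ◁ (c ▷ Y ≫ (α_ B A Y).hom ≫ B ◁ ma ≫ (α_ B Y A).inv ≫
          mb ▷ A ≫ (α_ Y B A).hom) ⊗≫ 𝟙 ((X ⊗ Y) ⊗ (B ⊗ A)) := by rw [hmAB]
  _ = 𝟙 ((A ⊗ B) ⊗ (X ⊗ Y)) ⊗≫
        ((α_ A B X).hom ≫ A ◁ lb ≫ (α_ A X B).inv ≫ la ▷ B ≫
          (α_ X A B).hom ≫ X ◁ c) ▷ Y ⊗≫
        X ◁ (B ◁ ma) ⊗≫ X ◁ (mb ▷ A) ⊗≫ 𝟙 ((X ⊗ Y) ⊗ (B ⊗ A)) := by coherence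
  _ = 𝟙 ((A ⊗ B) ⊗ (X ⊗ Y)) ⊗≫
        (c ▷ X ≫ (α_ B A X).hom ≫ B ◁ la ≫ (α_ B X A).inv ≫
          lb ▷ A ≫ (α_ X B A).hom) ▷ Y ⊗≫
        X ◁ (B ◁ ma) ⊗≫ X ◁ (mb ▷ A) ⊗≫ 𝟙 ((X ⊗ Y) ⊗ (B ⊗ A)) := by rw [hlAB]
  _ = 𝟙 ((A ⊗ B) ⊗ (X ⊗ Y)) ⊗≫ c ▷ (X ⊗ Y) ⊗≫ B ◁ (la ▷ Y) ⊗≫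
        (lb ▷ (A ⊗ Y) ≫ (X ⊗ B) ◁ ma) ⊗≫ X ◁ (mb ▷ A) ⊗≫
        𝟙 ((X ⊗ Y) ⊗ (B ⊗ A)) := by coherence
  _ = 𝟙 ((A ⊗ B) ⊗ (X ⊗ Y)) ⊗≫ c ▷ (X ⊗ Y) ⊗≫ B ◁ (la ▷ Y) ⊗≫
        ((B ⊗ X) ◁ ma ≫ lb ▷ (Y ⊗ A)) ⊗≫ X ◁ (mb ▷ A) ⊗≫
        𝟙 ((X ⊗ Y) ⊗ (B ⊗ A)) := by rw [whisker_exchange lb ma]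
  _ = c ▷ (X ⊗ Y) ≫
      (α_ B A (X ⊗ Y)).hom ≫
        B ◁ ((α_ A X Y).inv ≫ la ▷ Y ≫ (α_ X A Y).hom ≫ X ◁ ma ≫ (α_ X Y A).inv) ≫
          (α_ B (X ⊗ Y) A).inv ≫
            ((α_ B X Y).inv ≫ lb ▷ Y ≫ (α_ X B Y).hom ≫ X ◁ mb ≫ (α_ X Y B).inv) ▷ A ≫
              (α_ (X ⊗ Y) B A).hom := by coherence
end

section
/- Let C be a symmetric monoidal category and let λ be any half-braiding on an object X of C. Then the pair (λ, λ) satisfies COMM. (Hence, for C symmetric, (X, λ) ↦ (X, λ, λ) defines objects of the elliptic Drinfeld center from objects of the Drinfeld center.) -/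
open CategoryTheory CategoryTheory.MonoidalCategory

universe v u

variable {C : Type u} [Category.{v} C] [MonoidalCategory C]

/-- Inverse form of the `monoidal` axiom of a half-braiding. -/
lemma halfBraiding_monoidal_inv {X : C} (l : HalfBraiding X) (U U' : C) :
    (l.β (U ⊗ U')).inv =
      (α_ U U' X).hom ≫ (U ◁ (l.β U').inv) ≫ (α_ U X U').inv ≫ ((l.β U).inv ▷ U') ≫
        (α_ X U U').hom := by
  rw [← cancel_epi (l.β (U ⊗ U')).hom, Iso.hom_inv_id, l.monoidal]; simp

/-- In a symmetric monoidal category, any half-braiding `l` on an object `X`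
satisfies COMM with itself, so `(X, l) ↦ (X, l, l)` produces objects of the elliptic Drinfeld
center from objects of the Drinfeld center. -/
theorem diagonal_halfBraiding_COMM [SymmetricCategory C]
    {X : C} (l : HalfBraiding X) : COMM l l := by
  intro A B
  have hinv : (β_ B A).inv = (β_ A B).hom := by
    rw [← cancel_epi (β_ B A).hom]; simp
  have hnat := l.naturality (β_ A B).hom
  calc (α_ A B X).hom ≫ (A ◁ (l.β B).inv) ≫ (α_ A X B).inv ≫ ((l.β A).inv ▷ B) ≫
        (α_ X A B).hom ≫ (X ◁ (β_ A B).hom)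
      = (l.β (A ⊗ B)).inv ≫ (X ◁ (β_ A B).hom) := by
        rw [halfBraiding_monoidal_inv]; simp
    _ = ((β_ A B).hom ▷ X) ≫ (l.β (B ⊗ A)).inv := by
        rw [← cancel_mono (l.β (B ⊗ A)).hom]; simp only [Category.assoc, Iso.inv_hom_id,
          Category.comp_id, hnat, Iso.inv_hom_id_assoc]
    _ = ((β_ B A).inv ▷ X) ≫ (α_ B A X).hom ≫ (B ◁ (l.β A).inv) ≫ (α_ B X A).inv ≫
        ((l.β B).inv ▷ A) ≫ (α_ X B A).hom := by
        rw [hinv, halfBraiding_monoidal_inv]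
end

section
/- If C is a rigid monoidal category (every object has left and right duals), then the Drinfeld center Center C is rigid: for every object (X, λ) of Center C there is a half-braiding λ* on the left dual X* of X, with components the mates (λ*)_A = (λ_{A*})* of the components of λ, such that the evaluation and coevaluation morphisms of X in C are morphisms in Center C, exhibiting (X*, λ*) as a left dual of (X, λ) in Center C; similarly for right duals. -/
/-!
Let `X` carry a half-braiding `β` and have a right dual `D`. The mates
`γ_V : D ⊗ V ⟶ V ⊗ D` of the inverses `β_V⁻¹ : V ⊗ X ⟶ X ⊗ V` are natural and monoidal in `V`
because `β⁻¹` is, and the zigzag identities say exactly that evaluation and coevaluation intertwine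
`β` and `γ`. Only the invertibility of `γ_V` needs the left dual `ᘁX`: under the two dualities,
postcomposition with the mate of the twisted evaluation `β_D ≫ ε : X ⊗ D ⟶ 𝟙` becomes
precomposition with `β_W`, so `D ≅ ᘁX` by Yoneda, and after this identification postcomposition
with `γ_V` becomes precomposition with `β_W⁻¹`. So every object of the center has a right dual,
and since the center is braided, right duals are also left duals.
-/

open CategoryTheory CategoryTheory.MonoidalCategory

universe v u

namespace CategoryTheory.HalfBraiding

variable {C : Type u} [Category.{v} C] [MonoidalCategory C] {X : C} (b : HalfBraiding X)

theorem inv_naturality {U U' : C} (f : U ⟶ U') :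
    f ▷ X ≫ (b.β U').inv = (b.β U).inv ≫ X ◁ f := by
  rw [Iso.comp_inv_eq, Category.assoc, b.naturality, Iso.inv_hom_id_assoc]

theorem inv_monoidal (U V : C) :
    (b.β (U ⊗ V)).inv = (α_ _ _ _).hom ≫ U ◁ (b.β V).inv ≫ (α_ _ _ _).inv ≫
      (b.β U).inv ▷ V ≫ (α_ _ _ _).hom := by
  apply Iso.inv_ext
  simp [b.monoidal]

variable (D : C) [ExactPairing X D]

def dualHom (V : C) : D ⊗ V ⟶ V ⊗ D :=
  tensorRightHomEquiv _ X D V ((α_ D V X).hom ≫ (tensorLeftHomEquiv _ X D V).symm (b.β V).inv)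

theorem dualHom_whiskerRight_comp_evaluation (V : C) :
    b.dualHom D V ▷ X ≫ (α_ V D X).hom ≫ V ◁ ε_ X D =
      (α_ D V X).hom ≫ D ◁ (b.β V).inv ≫ (α_ D X V).inv ≫ ε_ X D ▷ V ≫ (λ_ V).hom ≫
        (ρ_ V).inv := by
  rw [← cancel_mono (ρ_ V).hom]
  simp only [Category.assoc, Iso.inv_hom_id, Category.comp_id]
  exact (tensorRightHomEquiv _ X D V).symm_apply_apply _

theorem coevaluation_whiskerRight_comp_dualHom (V : C) :
    η_ X D ▷ V ≫ (α_ X D V).hom ≫ X ◁ b.dualHom D V =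
      (λ_ V).hom ≫ (ρ_ V).inv ≫ V ◁ η_ X D ≫ (α_ V X D).inv ≫ (b.β V).inv ▷ D ≫
        (α_ X V D).hom := by
  dsimp [dualHom, tensorLeftHomEquiv, tensorRightHomEquiv]
  calc
    _ = 𝟙 _ ⊗≫ (η_ X D ▷ V ≫ (X ⊗ D) ◁ ((ρ_ V).inv ≫ V ◁ η_ X D ⊗≫ (b.β V).inv ▷ D)) ⊗≫
          X ◁ ε_ X D ▷ (V ⊗ D) ⊗≫ 𝟙 _ := by
      monoidal
    _ = 𝟙 _ ⊗≫ (V ◁ η_ X D ⊗≫ (b.β V).inv ▷ D) ⊗≫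
          (η_ X D ▷ X ⊗≫ X ◁ ε_ X D) ▷ (V ⊗ D) ⊗≫ 𝟙 _ := by
      rw [← whisker_exchange]; monoidal
    _ = _ := by rw [ExactPairing.evaluation_coevaluation'']; monoidal

theorem evaluation_comm (U : C) :
    ε_ X D ▷ U ≫ (λ_ U).hom ≫ (ρ_ U).inv =
      ((α_ D X U).hom ≫ D ◁ (b.β U).hom ≫ (α_ D U X).inv ≫ b.dualHom D U ▷ X ≫
        (α_ U D X).hom) ≫ U ◁ ε_ X D := by
  simp [dualHom_whiskerRight_comp_evaluation]

theorem coevaluation_comm (U : C) :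
    η_ X D ▷ U ≫ ((α_ X D U).hom ≫ X ◁ b.dualHom D U ≫ (α_ X U D).inv ≫ (b.β U).hom ▷ D ≫
      (α_ U X D).hom) = ((λ_ U).hom ≫ (ρ_ U).inv) ≫ U ◁ η_ X D := by
  slice_lhs 1 3 => rw [coevaluation_whiskerRight_comp_dualHom]
  simp

theorem dualHom_naturality {U U' : C} (f : U ⟶ U') :
    D ◁ f ≫ b.dualHom D U' = b.dualHom D U ≫ f ▷ D := by
  apply (tensorRightHomEquiv _ X D U').symm.injective
  simp only [dualHom, ← tensorRightHomEquiv_naturality, tensorRightHomEquiv_symm_naturality,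
    Equiv.symm_apply_apply, tensorLeftHomEquiv, Equiv.coe_fn_symm_mk, Category.assoc]
  rw [associator_naturality_middle_assoc, ← whiskerLeft_comp_assoc, inv_naturality,
    whiskerLeft_comp_assoc, associator_inv_naturality_right_assoc, whisker_exchange_assoc,
    leftUnitor_naturality]

theorem dualHom_tensor (U V : C) :
    b.dualHom D (U ⊗ V) = (α_ _ _ _).inv ≫ b.dualHom D U ▷ V ≫ (α_ _ _ _).hom ≫
      U ◁ b.dualHom D V ≫ (α_ _ _ _).inv := by
  apply (tensorRightHomEquiv _ X D (U ⊗ V)).symm.injective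
  symm
  calc
    _ = 𝟙 _ ⊗≫ b.dualHom D U ▷ (V ⊗ X) ⊗≫
          U ◁ (b.dualHom D V ▷ X ≫ (α_ V D X).hom ≫ V ◁ ε_ X D) ⊗≫ 𝟙 _ := by
      dsimp [tensorRightHomEquiv]; monoidal
    _ = 𝟙 _ ⊗≫ (b.dualHom D U ▷ (V ⊗ X) ≫ (U ⊗ D) ◁ (b.β V).inv) ⊗≫
          U ◁ ε_ X D ▷ V ⊗≫ 𝟙 _ := by
      rw [dualHom_whiskerRight_comp_evaluation]; monoidal
    _ = 𝟙 _ ⊗≫ (D ⊗ U) ◁ (b.β V).inv ⊗≫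
          (b.dualHom D U ▷ X ≫ (α_ U D X).hom ≫ U ◁ ε_ X D) ▷ V ⊗≫ 𝟙 _ := by
      rw [← whisker_exchange]; monoidal
    _ = _ := by
      rw [dualHom_whiskerRight_comp_evaluation, dualHom, Equiv.symm_apply_apply, inv_monoidal]
      dsimp [tensorLeftHomEquiv]; monoidal

variable [HasLeftDual X]

def rightDualToLeftDual : D ⟶ ᘁX :=
  tensorLeftHomEquiv D (ᘁX) X (𝟙_ C) ((b.β D).hom ≫ ε_ X D) ≫ (ρ_ (ᘁX)).hom

theorem whiskerLeft_rightDualToLeftDual_comp_evaluation :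
    X ◁ b.rightDualToLeftDual D ≫ ε_ (ᘁX) X = (b.β D).hom ≫ ε_ X D := by
  conv_rhs => rw [← (tensorLeftHomEquiv D (ᘁX) X (𝟙_ C)).symm_apply_apply ((b.β D).hom ≫ ε_ X D)]
  rw [rightDualToLeftDual]
  generalize tensorLeftHomEquiv D (ᘁX) X (𝟙_ C) ((b.β D).hom ≫ ε_ X D) = f
  dsimp [tensorLeftHomEquiv]
  monoidal

instance : IsIso (b.rightDualToLeftDual D) := by
  refine isIso_of_yoneda_map_bijective _ fun W => ?_
  -- `(W ⟶ D) ≃ (W ⊗ X ⟶ 𝟙) ≃ (X ⊗ W ⟶ 𝟙) ≃ (W ⟶ ᘁX)`, the middle step being `(b.β W).hom ≫ -`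
  let e := (λ_ D).symm.homToEquiv.trans <| (tensorRightHomEquiv W X D (𝟙_ C)).symm.trans <|
    (b.β W).symm.homFromEquiv.trans <|
    (tensorLeftHomEquiv W (ᘁX) X (𝟙_ C)).trans (ρ_ (ᘁX)).homToEquiv
  convert e.bijective using 1
  funext x
  calc x ≫ b.rightDualToLeftDual D
      = tensorLeftHomEquiv W (ᘁX) X (𝟙_ C) (X ◁ x ≫ (b.β D).hom ≫ ε_ X D) ≫ (ρ_ (ᘁX)).hom := by
        rw [rightDualToLeftDual, ← Category.assoc,
          ← Equiv.apply_symm_apply (tensorLeftHomEquiv W (ᘁX) X (𝟙_ C)) (x ≫ _),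
          tensorLeftHomEquiv_symm_naturality, Equiv.symm_apply_apply]
    _ = tensorLeftHomEquiv W (ᘁX) X (𝟙_ C) ((b.β W).hom ≫ x ▷ X ≫ ε_ X D) ≫ (ρ_ (ᘁX)).hom := by
        rw [b.naturality_assoc]
    _ = e x := by simp [e, tensorRightHomEquiv, unitors_inv_equal]

instance (V : C) : IsIso (b.dualHom D V) := by
  refine isIso_of_yoneda_map_bijective _ fun W => ?_
  -- `(W ⟶ D ⊗ V) ≃ (W ⟶ ᘁX ⊗ V) ≃ (X ⊗ W ⟶ V) ≃ (W ⊗ X ⟶ V) ≃ (W ⟶ V ⊗ D)`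
  let e := (asIso (b.rightDualToLeftDual D ▷ V)).homToEquiv.trans <|
    (tensorLeftHomEquiv W (ᘁX) X V).symm.trans <|
    (b.β W).homFromEquiv.trans (tensorRightHomEquiv W X D V)
  convert e.bijective using 1
  funext x
  apply (tensorRightHomEquiv W X D V).symm.injective
  rw [tensorRightHomEquiv_symm_naturality, dualHom, Equiv.symm_apply_apply]
  simp only [e, Equiv.trans_apply, Iso.homToEquiv_apply, asIso_hom, Iso.homFromEquiv_apply,
    Equiv.symm_apply_apply, tensorLeftHomEquiv, Equiv.symm_mk, Equiv.coe_fn_mk, whiskerLeft_comp,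
    whiskerRight_tensor, Category.assoc]
  rw [associator_inv_naturality_middle_assoc, ← comp_whiskerRight_assoc,
    whiskerLeft_rightDualToLeftDual_comp_evaluation, ← Category.assoc (b.β W).inv,
    ← inv_naturality, Category.assoc, inv_monoidal]
  simp

noncomputable def rightDual : HalfBraiding D where
  β V := asIso (b.dualHom D V)
  monoidal := b.dualHom_tensor D
  naturality := b.dualHom_naturality D

end CategoryTheory.HalfBraiding

namespace CategoryTheory.Center

variable {C : Type u} [Category.{v} C] [MonoidalCategory C]
variable (X : Center C) [HasRightDual X.1] [HasLeftDual X.1]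

noncomputable def rightDual : Center C := ⟨X.1ᘁ, X.2.rightDual _⟩

noncomputable def evaluation : rightDual X ⊗ X ⟶ 𝟙_ (Center C) where
  f := ε_ X.1 X.1ᘁ
  comm := X.2.evaluation_comm _

noncomputable def coevaluation : 𝟙_ (Center C) ⟶ X ⊗ rightDual X where
  f := η_ X.1 X.1ᘁ
  comm := X.2.coevaluation_comm _

noncomputable instance : ExactPairing X (rightDual X) where
  coevaluation' := coevaluation X
  evaluation' := evaluation X
  coevaluation_evaluation' := by
    ext
    simp only [comp_f, whiskerLeft_f, whiskerRight_f, associator_inv_f, rightUnitor_hom_f,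
      leftUnitor_inv_f, evaluation, coevaluation]
    exact ExactPairing.coevaluation_evaluation X.1 X.1ᘁ
  evaluation_coevaluation' := by
    ext
    simp only [comp_f, whiskerLeft_f, whiskerRight_f, associator_hom_f, leftUnitor_hom_f,
      rightUnitor_inv_f, evaluation, coevaluation]
    exact ExactPairing.evaluation_coevaluation X.1 X.1ᘁ

noncomputable instance : HasRightDual X := ⟨rightDual X⟩

noncomputable instance [RightRigidCategory C] [LeftRigidCategory C] :
    RightRigidCategory (Center C) where
  rightDual _ := inferInstance

end CategoryTheory.Center

/-- If `C` is a rigid monoidal category, then its Drinfeld center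
`Center C` is rigid: every object `(X, λ)` of `Center C` has a left dual (with underlying
object the left dual `X*` of `X`, equipped with the half-braiding whose components are the
mates of the components of `λ`, so that the evaluation and coevaluation of `X` are morphisms
in `Center C`) and likewise a right dual.  Since `RigidCategory` carries the data of the
duals, the existence claim is stated as `Nonempty`. -/
theorem center_rigidCategory {C : Type u} [Category.{v} C] [MonoidalCategory C]
    [RigidCategory C] : Nonempty (RigidCategory (Center C)) :=
  ⟨BraidedCategory.rigidCategoryOfRightRigidCategory⟩
end

section
/- Let k be a field, G a group, and X an object of Rep k G. If λ and μ are two half-braidings on X whose components at the left regular representation agree, i.e. λ_{leftRegular} = μ_{leftRegular} as morphisms k[G] ⊗ X → X ⊗ k[G], then λ = μ (a half-braiding on an object of Rep k G is completely determined by its component at the left regular representation). -/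
/-!
For `a ∈ A` the map `k[G] ⟶ A`, `g ↦ ρ_A(g) a`, is a morphism of representations sending
`single 1 1` to `a`. Hence morphisms out of `X ⊗ A` are determined by their restrictions along
`X ◁ f` for `f : k[G] ⟶ A`, and by naturality these restrictions of a half-braiding at `A` only
involve its component at `k[G]`.
-/

open CategoryTheory CategoryTheory.MonoidalCategory

universe u

namespace CategoryTheory.HalfBraiding

variable {C : Type*} [Category C] [MonoidalCategory C]

theorem ext {X : C} {l m : HalfBraiding X} (h : ∀ U, (l.β U).hom = (m.β U).hom) : l = m := by
  obtain ⟨β, _, _⟩ := l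
  obtain ⟨β', _, _⟩ := m
  congr
  exact funext fun U => Iso.ext (h U)

end CategoryTheory.HalfBraiding

namespace Rep

variable {k G : Type u} [CommRing k] [Monoid G]

theorem whiskerLeft_leftRegular_hom_ext {X A Y : Rep k G} {φ ψ : X ⊗ A ⟶ Y}
    (h : ∀ f : leftRegular k G ⟶ A, X ◁ f ≫ φ = X ◁ f ≫ ψ) : φ = ψ := by
  ext1
  refine Representation.IntertwiningMap.ext (TensorProduct.ext' fun x a => ?_)
  have := congr($(h (leftRegularHom A a)).hom (x ⊗ₜ[k] MonoidAlgebra.single (1 : G) (1 : k)))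
  simpa [leftRegularHom_hom_single] using this

end Rep

/-- A half-braiding on an object `X` of `Rep k G` is completely determined
by its component at the left regular representation `k[G]`: if the components of two
half-braidings `l`, `m` at `Rep.leftRegular k G` agree (as morphisms
`k[G] ⊗ X ⟶ X ⊗ k[G]`, i.e. the inverses `(l.β _).inv` in Mathlib's convention), then
`l = m`. -/
theorem halfBraiding_ext_of_leftRegular
    {k G : Type u} [Field k] [Group G] (X : Rep k G)
    (l m : HalfBraiding X)
    (h : (l.β (Rep.leftRegular k G)).inv = (m.β (Rep.leftRegular k G)).inv) :
    l = m := by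
  have hom_eq : (l.β (Rep.leftRegular k G)).hom = (m.β _).hom := (Iso.inv_eq_inv _ _).mp h
  refine HalfBraiding.ext fun A => Rep.whiskerLeft_leftRegular_hom_ext fun f => ?_
  rw [l.naturality, m.naturality, hom_eq]
end

section
/- Let G be a finite group and k a commutative ring. On the k-module of functions G × G × G → k, the k-bilinear product (f₁ * f₂)(h, g₁, g₂) = Σ_{u ∈ G} f₁(h·u⁻¹, u·g₁·u⁻¹, u·g₂·u⁻¹) · f₂(u, g₁, g₂) is associative, and the function e(h, g₁, g₂) = (if h = 1 then 1 else 0) is a two-sided unit for it; thus the elliptic Drinfeld double D^el(G) is a unital associative k-algebra. -/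
/-- The product of the elliptic Drinfeld double `D^el(G)`, realized on the `k`-module of
functions `G × G × G → k`:
`(f₁ * f₂)(h, g₁, g₂) = Σ_{u ∈ G} f₁(h·u⁻¹, u·g₁·u⁻¹, u·g₂·u⁻¹) · f₂(u, g₁, g₂)`. -/
def elMul {G : Type*} [Group G] [Fintype G] {k : Type*} [CommRing k]
    (f₁ f₂ : G × G × G → k) : G × G × G → k :=
  fun p => ∑ u : G,
    f₁ (p.1 * u⁻¹, u * p.2.1 * u⁻¹, u * p.2.2 * u⁻¹) * f₂ (u, p.2.1, p.2.2)

/-- The unit of the elliptic Drinfeld double `D^el(G)`: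
`e(h, g₁, g₂) = if h = 1 then 1 else 0`. -/
def elOne {G : Type*} [Group G] [DecidableEq G] {k : Type*} [CommRing k] :
    G × G × G → k :=
  fun p => if p.1 = 1 then 1 else 0

/-- The product of the elliptic Drinfeld double `D^el(G)` is associative
and `elOne` is a two-sided unit for it, so `D^el(G)` is a unital associative `k`-algebra. -/
theorem elMul_assoc_and_unit {G : Type*} [Group G] [Fintype G] [DecidableEq G]
    {k : Type*} [CommRing k] :
    (∀ f₁ f₂ f₃ : G × G × G → k, elMul (elMul f₁ f₂) f₃ = elMul f₁ (elMul f₂ f₃)) ∧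
    (∀ f : G × G × G → k, elMul elOne f = f) ∧
    (∀ f : G × G × G → k, elMul f elOne = f) := by
  refine ⟨?_, ?_, ?_⟩
  · intro f₁ f₂ f₃
    funext p
    obtain ⟨h, g₁, g₂⟩ := p
    simp only [elMul, Finset.sum_mul, Finset.mul_sum]
    conv_rhs => rw [Finset.sum_comm]
    refine Finset.sum_congr rfl fun u _ => ?_
    conv_rhs => rw [← Equiv.sum_comp (Equiv.mulRight u)
      (fun w => f₁ (h * w⁻¹, w * g₁ * w⁻¹, w * g₂ * w⁻¹) *
        (f₂ (w * u⁻¹, u * g₁ * u⁻¹, u * g₂ * u⁻¹) * f₃ (u, g₁, g₂)))]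
    refine Finset.sum_congr rfl fun v _ => ?_
    simp only [Equiv.coe_mulRight, mul_inv_rev, mul_assoc, inv_mul_cancel_left,
      mul_inv_cancel_left, mul_inv_cancel, mul_one]
  · intro f
    funext p
    obtain ⟨h, g₁, g₂⟩ := p
    simp only [elMul, elOne]
    rw [Finset.sum_eq_single h]
    · simp
    · intro u _ hu
      simp [mul_inv_eq_one, hu.symm]
    · simp
  · intro f
    funext p
    obtain ⟨h, g₁, g₂⟩ := p
    simp only [elMul, elOne]
    rw [Finset.sum_eq_single 1]
    · simp
    · intro u _ hu; simp [hu]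
    · simp
end

section
/- Let G be a finite group and k a commutative ring. The k-linear map ι from the Drinfeld double D(G) (functions G × G → k with product (f₁ * f₂)(h, g) = Σ_{u ∈ G} f₁(h·u⁻¹, u·g·u⁻¹) · f₂(u, g)) to the elliptic Drinfeld double D^el(G) (functions G × G × G → k with product (f₁ * f₂)(h, g₁, g₂) = Σ_{u ∈ G} f₁(h·u⁻¹, u·g₁·u⁻¹, u·g₂·u⁻¹) · f₂(u, g₁, g₂)) defined by ι(f)(h, g₁, g₂) = (if g₁ = g₂ then f(h, g₁) else 0) is injective and multiplicative: ι(f₁ * f₂) = ι(f₁) * ι(f₂). (It sends the basis element h·δ_g to h·δ_{(g,g)}, the diagonal inclusion.) -/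
/-- The product of the Drinfeld double `D(G)`, realized on the `k`-module of functions
`G × G → k`: `(f₁ * f₂)(h, g) = Σ_{u ∈ G} f₁(h·u⁻¹, u·g·u⁻¹) · f₂(u, g)`. -/
def dMul {G : Type*} [Group G] [Fintype G] {k : Type*} [CommRing k]
    (f₁ f₂ : G × G → k) : G × G → k :=
  fun p => ∑ u : G, f₁ (p.1 * u⁻¹, u * p.2 * u⁻¹) * f₂ (u, p.2)

/-- The diagonal embedding `D(G) → D^el(G)`, `ι(f)(h, g₁, g₂) = if g₁ = g₂ then f(h, g₁)
else 0` (sending the basis element `h·δ_g` to `h·δ_{(g,g)}`). -/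
def dIota {G : Type*} [Group G] [DecidableEq G] {k : Type*} [CommRing k]
    (f : G × G → k) : G × G × G → k :=
  fun p => if p.2.1 = p.2.2 then f (p.1, p.2.1) else 0

/-- The diagonal embedding `ι : D(G) → D^el(G)` is injective and
multiplicative: `ι(f₁ * f₂) = ι(f₁) * ι(f₂)`. -/
theorem dIota_injective_and_multiplicative {G : Type*} [Group G] [Fintype G] [DecidableEq G]
    {k : Type*} [CommRing k] :
    Function.Injective (dIota (G := G) (k := k)) ∧
    (∀ f₁ f₂ : G × G → k, dIota (dMul f₁ f₂) = elMul (dIota f₁) (dIota f₂)) := by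
  constructor
  · intro f g h
    funext p
    have := congrFun h (p.1, p.2, p.2)
    simpa [dIota] using this
  · intro f₁ f₂
    funext p
    obtain ⟨h, g₁, g₂⟩ := p
    simp only [dIota, elMul, dMul]
    by_cases hg : g₁ = g₂
    · subst hg
      simp
    · simp only [if_neg hg]
      refine (Finset.sum_eq_zero fun u _ => ?_).symm
      have hne : ¬ (u * g₁ * u⁻¹ = u * g₂ * u⁻¹) := fun h' =>
        hg (mul_left_cancel (mul_right_cancel h'))
      simp [hne]
end

section
/- Let G be a finite group and k a commutative ring. Let e_{h,(g₁,g₂)} ∈ D^el(G) denote the indicator function of the point (h, g₁, g₂) ∈ G × G × G. Then the k-linear map Δ : D^el(G) → D^el(G) ⊗_k D^el(G) determined on this basis by Δ(e_{h,(g₁,g₂)}) = Σ_{a·a' = g₁} Σ_{b·b' = g₂} e_{h,(a',b')} ⊗ e_{h,(a,b)} is a homomorphism of unital k-algebras: Δ(f₁ * f₂) = Δ(f₁) * Δ(f₂) for all f₁, f₂ ∈ D^el(G), and Δ sends the unit to the unit, where D^el(G) ⊗_k D^el(G) carries the tensor-product algebra structure. -/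
/-- The tensor-product algebra structure on `D^el(G) ⊗_k D^el(G)`, realized on functions
`(G × G × G) × (G × G × G) → k` (using `k^S ⊗_k k^T ≅ k^{S × T}` for finite `S`, `T`):
multiplication is `elMul` performed independently in each tensor factor. -/
def elMul2 {G : Type*} [Group G] [Fintype G] {k : Type*} [CommRing k]
    (F₁ F₂ : (G × G × G) × (G × G × G) → k) : (G × G × G) × (G × G × G) → k :=
  fun pq => ∑ u : G, ∑ v : G,
    F₁ ((pq.1.1 * u⁻¹, u * pq.1.2.1 * u⁻¹, u * pq.1.2.2 * u⁻¹),
        (pq.2.1 * v⁻¹, v * pq.2.2.1 * v⁻¹, v * pq.2.2.2 * v⁻¹)) *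
      F₂ ((u, pq.1.2.1, pq.1.2.2), (v, pq.2.2.1, pq.2.2.2))

/-- The unit `e ⊗ e` of the tensor-product algebra `D^el(G) ⊗_k D^el(G)`. -/
def elOne2 {G : Type*} [Group G] [DecidableEq G] {k : Type*} [CommRing k] :
    (G × G × G) × (G × G × G) → k :=
  fun pq => if pq.1.1 = 1 ∧ pq.2.1 = 1 then 1 else 0

/-- The comultiplication `Δ : D^el(G) → D^el(G) ⊗_k D^el(G)` (componentwise, from the
comultiplications of `k[G]` and of `F(G)^cop` in each dual factor), in closed form. -/
def elComul {G : Type*} [Group G] [DecidableEq G] {k : Type*} [CommRing k]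
    (f : G × G × G → k) : (G × G × G) × (G × G × G) → k :=
  fun pq => if pq.1.1 = pq.2.1
    then f (pq.1.1, pq.2.2.1 * pq.1.2.1, pq.2.2.2 * pq.1.2.2) else 0

/-- The comultiplication `Δ` of the elliptic Drinfeld double `D^el(G)` is
determined on the basis elements `e_{h,(g₁,g₂)}` by
`Δ(e_{h,(g₁,g₂)}) = Σ_{a·a' = g₁} Σ_{b·b' = g₂} e_{h,(a',b')} ⊗ e_{h,(a,b)}`,
and it is a homomorphism of unital `k`-algebras:
`Δ(f₁ * f₂) = Δ(f₁) * Δ(f₂)` and `Δ(1) = 1 ⊗ 1`. -/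
theorem elComul_basis_and_algHom {G : Type*} [Group G] [Fintype G] [DecidableEq G]
    {k : Type*} [CommRing k] :
    (∀ h g₁ g₂ : G,
      elComul (fun r => if r = (h, g₁, g₂) then (1 : k) else 0) =
        fun pq => ∑ a : G, ∑ b : G,
          (if pq.1 = (h, a⁻¹ * g₁, b⁻¹ * g₂) then (1 : k) else 0) *
            (if pq.2 = (h, a, b) then 1 else 0)) ∧
    (∀ f₁ f₂ : G × G × G → k, elComul (elMul f₁ f₂) = elMul2 (elComul f₁) (elComul f₂)) ∧
    (elComul (elOne (G := G) (k := k)) = elOne2) := by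
  refine ⟨?_, ?_, ?_⟩
  · intro h g₁ g₂
    funext pq
    obtain ⟨⟨h₁, a₁, a₂⟩, h₂, b₁, b₂⟩ := pq
    simp only [elComul]
    rw [Fintype.sum_eq_single b₁, Fintype.sum_eq_single b₂]
    · by_cases hh : h₁ = h₂
      · subst hh
        by_cases h1 : h₁ = h
        · subst h1
          by_cases hg1 : b₁ * a₁ = g₁ <;> by_cases hg2 : b₂ * a₂ = g₂ <;>
            simp_all [Prod.ext_iff, eq_inv_mul_iff_mul_eq]
        · simp [Prod.ext_iff, h1]
      · simp only [Prod.ext_iff]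
        split_ifs <;> simp_all
    · intro b hb
      simp only [Prod.ext_iff]
      split_ifs <;> simp_all
    · intro a ha
      apply Finset.sum_eq_zero
      intro b _
      simp only [Prod.ext_iff]
      split_ifs <;> simp_all
  · intro f₁ f₂
    funext pq
    obtain ⟨⟨h₁, a₁, a₂⟩, h₂, b₁, b₂⟩ := pq
    simp only [elComul, elMul, elMul2]
    by_cases hh : h₁ = h₂
    · subst hh
      simp only [if_pos rfl]
      refine Finset.sum_congr rfl fun u _ => ?_
      rw [Fintype.sum_eq_single u]
      · simp [mul_assoc]
      · intro v hv
        simp [if_neg (Ne.symm hv)]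
    · rw [if_neg hh]
      refine (Finset.sum_eq_zero fun u _ => Finset.sum_eq_zero fun v _ => ?_).symm
      by_cases huv : u = v
      · subst huv
        rw [if_neg (by simpa using hh), zero_mul]
      · rw [if_neg huv, mul_zero]
  · funext pq
    obtain ⟨⟨h₁, a₁, a₂⟩, h₂, b₁, b₂⟩ := pq
    simp only [elComul, elOne, elOne2]
    split_ifs <;> simp_all
end
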